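/- arXiv:1503.04867 — 3 statements merged into one kernel-verified Lean document; each statement's English description precedes it below -/
import Mathlib

section
/- Assume the lens setting. Then: (i) every support D i is nonempty; (ii) the supports cover M, i.e. ⋃ i, D i = M; (iii) distinct supports have disjoint interiors, i.e. for i ≠ j, interior (D i) ∩ interior (D j) = ∅; and (iv) for every index i, C i equals the union of those supports D j for which C j ⊆ C i. -/
/-!
Every point lies in the support of the last set `C k` containing it, and `C k ⊆ C i` for every
earlier `C i` containing the point; this gives the covering and the decomposition of `C i`.
For `i < j`, `D i` avoids `interior (C j) ⊇ interior (D j)`. Finally, if `C i` were covered by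
later sets, then the first later set `C j₀` meeting `C i` and the union of the sets disjoint
from `C j₀` would split the connected set `C i` into two disjoint closed pieces.
-/

open Set

section Order

variable {M : Type*} {ι : Type*} [LinearOrder ι]

def IsNested (C : ι → Set M) : Prop :=
  ∀ i j, i < j → C j ⊂ C i ∨ C i ∩ C j = ∅

lemma IsNested.subset_of_le {C : ι → Set M} (hC : IsNested C) {i k : ι} (hik : i ≤ k) {x : M}
    (hxi : x ∈ C i) (hxk : x ∈ C k) : C k ⊆ C i := by
  rcases hik.lt_or_eq with hlt | rfl
  · exact ((hC i k hlt).resolve_right fun h => h.subset ⟨hxi, hxk⟩).subset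
  · rfl

lemma exists_le_mem_diff_iUnion_gt [Finite ι] {C : ι → Set M} {i : ι} {x : M}
    (hx : x ∈ C i) :
    ∃ k, i ≤ k ∧ x ∈ C k \ ⋃ j > k, C j := by
  obtain ⟨k, hkmax⟩ := (toFinite {j | x ∈ C j}).exists_maximal ⟨i, hx⟩
  refine ⟨k, not_lt.mp fun hlt => hkmax.not_gt hx hlt, hkmax.prop, ?_⟩
  simp only [mem_iUnion, not_exists]
  exact fun j hkj hxj => hkmax.not_gt hxj hkj

end Order

section Topology

variable {M : Type*} [TopologicalSpace M] {ι : Type*} [LinearOrder ι]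

def variletSupport (C : ι → Set M) (i : ι) : Set M :=
  closure (C i \ ⋃ j > i, C j)

variable {C : ι → Set M}

lemma variletSupport_subset {i : ι} (hi : IsClosed (C i)) : variletSupport C i ⊆ C i :=
  closure_minimal sdiff_subset hi

lemma variletSupport_subset_compl_interior {i j : ι} (hij : i < j) :
    variletSupport C i ⊆ (interior (C j))ᶜ := by
  rw [variletSupport, ← closure_compl]
  exact closure_mono fun x hx hxj => hx.2 (mem_biUnion hij hxj)

lemma disjoint_interior_variletSupport {i j : ι} (hj : IsClosed (C j)) (hij : i < j) :
    Disjoint (interior (variletSupport C i)) (interior (variletSupport C j)) :=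
  disjoint_compl_left.mono (interior_subset.trans (variletSupport_subset_compl_interior hij))
    (interior_mono (variletSupport_subset hj))

lemma IsNested.diff_iUnion_gt_nonempty [Finite ι] (hC : IsNested C)
    (hclosed : ∀ j, IsClosed (C j)) (hne : ∀ j, (C j).Nonempty) {i : ι}
    (hi : IsPreconnected (C i)) :
    (C i \ ⋃ j > i, C j).Nonempty := by
  by_contra hcov
  rw [not_nonempty_iff_eq_empty, sdiff_eq_empty] at hcov
  have hmeet : ∀ x ∈ C i, ∃ j, i < j ∧ x ∈ C j := fun x hx => by simpa using hcov hx
  have hlater : {j | i < j ∧ (C i ∩ C j).Nonempty}.Nonempty := by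
    obtain ⟨x, hx⟩ := hne i
    obtain ⟨j, hij, hxj⟩ := hmeet x hx
    exact ⟨j, hij, x, hx, hxj⟩
  obtain ⟨j₀, hj₀min⟩ := (toFinite _).exists_minimal hlater
  obtain ⟨hij₀, x₀, hx₀i, hx₀j₀⟩ := hj₀min.prop
  have hj₀i : C j₀ ⊂ C i :=
    (hC i j₀ hij₀).resolve_right fun h => h.subset ⟨hx₀i, hx₀j₀⟩
  set V := ⋃ j ∈ {j | C j₀ ∩ C j = ∅}, C j
  have hV : Disjoint (C j₀) V :=
    disjoint_iUnion₂_right.mpr fun _ h => disjoint_iff_inter_eq_empty.mpr h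
  have hsplit : C i ⊆ C j₀ ∪ V := by
    intro x hx
    obtain ⟨j, hij, hxj⟩ := hmeet x hx
    have hj₀j : j₀ ≤ j := not_lt.mp fun hlt => hj₀min.not_lt ⟨hij, x, hx, hxj⟩ hlt
    rcases hj₀j.lt_or_eq with hlt | rfl
    · rcases hC j₀ j hlt with hsub | hdisj
      · exact Or.inl (hsub.subset hxj)
      · exact Or.inr (mem_biUnion hdisj hxj)
    · exact Or.inl hxj
  have hVclosed : IsClosed V := (toFinite _).isClosed_biUnion fun j _ => hclosed j
  rcases isPreconnected_iff_subset_of_disjoint_closed.mp hi _ _ (hclosed j₀) hVclosed hsplit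
      (by rw [hV.inter_eq, inter_empty]) with h | h
  · exact hj₀i.not_subset h
  · obtain ⟨y, hy⟩ := hne j₀
    exact disjoint_left.mp hV hy (h (hj₀i.subset hy))

end Topology

theorem varilet_support_properties_general {M : Type*} [MetricSpace M]
    {ι : Type*} [Fintype ι] [LinearOrder ι]
    (C : ι → Set M)
    (hclosed : ∀ i, IsClosed (C i))
    (hconn : ∀ i, IsConnected (C i))
    (hnest : ∀ i j, i < j → C j ⊂ C i ∨ C i ∩ C j = ∅)
    (hcover : ⋃ i, C i = Set.univ)
    (D : ι → Set M)
    (hD : ∀ i, D i = closure (C i \ ⋃ j > i, C j)) :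
    (∀ i, (D i).Nonempty) ∧
    (⋃ i, D i = Set.univ) ∧
    (∀ i j, i ≠ j → interior (D i) ∩ interior (D j) = ∅) ∧
    (∀ i, C i = ⋃ j ∈ {j | C j ⊆ C i}, D j) := by
  obtain rfl : D = variletSupport C := funext hD
  have hnest : IsNested C := hnest
  refine ⟨fun i => ?_, ?_, fun i j hij => ?_, fun i => ?_⟩
  · exact (hnest.diff_iUnion_gt_nonempty hclosed (fun j => (hconn j).nonempty)
      (hconn i).isPreconnected).closure
  · refine eq_univ_of_forall fun x => ?_
    obtain ⟨i, hx⟩ := mem_iUnion.mp (hcover ▸ mem_univ x)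
    obtain ⟨k, -, hk⟩ := exists_le_mem_diff_iUnion_gt hx
    exact mem_iUnion.mpr ⟨k, subset_closure hk⟩
  · rw [← disjoint_iff_inter_eq_empty]
    rcases hij.lt_or_gt with hlt | hlt
    · exact disjoint_interior_variletSupport (hclosed j) hlt
    · exact (disjoint_interior_variletSupport (hclosed i) hlt).symm
  · refine (iUnion₂_subset fun j hj => (variletSupport_subset (hclosed j)).trans hj).antisymm' ?_
    intro x hx
    obtain ⟨k, hik, hk⟩ := exists_le_mem_diff_iUnion_gt hx
    exact mem_biUnion (hnest.subset_of_le hik hx hk.1) (subset_closure hk)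

/-- Elementary properties of varilet supports.  Given a lens on a compact metric
space `M` (a finite nested family `C` of closed connected sets with nonempty
interior covering `M`), the supports `D i = closure (C i \ ⋃ j > i, C j)` are
nonempty, cover `M`, have pairwise disjoint interiors, and each `C i` is the
union of the supports `D j` with `C j ⊆ C i`. -/
theorem varilet_support_properties {M : Type*} [MetricSpace M] [CompactSpace M]
    {ι : Type*} [Fintype ι] [LinearOrder ι]
    (C : ι → Set M)
    (hclosed : ∀ i, IsClosed (C i))
    (hconn : ∀ i, IsConnected (C i))
    (hint : ∀ i, (interior (C i)).Nonempty)
    (hnest : ∀ i j, i < j → C j ⊂ C i ∨ C i ∩ C j = ∅)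
    (hcover : ⋃ i, C i = Set.univ)
    (D : ι → Set M)
    (hD : ∀ i, D i = closure (C i \ ⋃ j > i, C j)) :
    (∀ i, (D i).Nonempty) ∧
    (⋃ i, D i = Set.univ) ∧
    (∀ i j, i ≠ j → interior (D i) ∩ interior (D j) = ∅) ∧
    (∀ i, C i = ⋃ j ∈ {j | C j ⊆ C i}, D j) :=
  varilet_support_properties_general C hclosed hconn hnest hcover D hD
end

section
/- Assume the lens setting with M connected, and let λ : M → ℝ be constant-boundary for the lens. Suppose i₀ is an index with C i₀ = M, and for every index i let λ_i : M → ℝ be a flat extension of λ over D i. Then for every point p ∈ M, λ(p) = λ_{i₀}(p) + Σ_{i ≠ i₀} (λ_i(p) − c_i(λ)), where c_i(λ) is the common value of λ on the frontier of C i and the sum runs over all indices i ≠ i₀. -/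
open Set Filter Topology

/-!
Fix `p` and let `i₀ = k₀ < k₁ < ⋯ < kₘ` be the indices with `p ∈ C kₜ`; the sum telescopes once
we know `lamF kₜ p = c kₜ₊₁`, `lamF kₘ p = lam p` and `lamF i p = c i` for `p ∉ C i`. These values
come from boundary bumping: in a compact connected space the closure of a component of `M \ D i`
meets `D i`, so a flat extension is determined off `D i` by its values on `D i`; hence it
coincides there with an explicit locally constant function having the same boundary values.
-/

theorem exists_isClopen_of_connectedComponent_subset {X : Type*} [TopologicalSpace X]
    [CompactSpace X] [T2Space X] {x : X} {U : Set X} (hU : IsOpen U)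
    (h : connectedComponent x ⊆ U) : ∃ E, IsClopen E ∧ x ∈ E ∧ E ⊆ U := by
  have : Nonempty { s : Set X // IsClopen s ∧ x ∈ s } := ⟨⟨univ, isClopen_univ, mem_univ x⟩⟩
  have hdir : Directed (· ⊇ ·) fun s : { s : Set X // IsClopen s ∧ x ∈ s } => s.1 :=
    fun s t => ⟨⟨s.1 ∩ t.1, s.2.1.inter t.2.1, s.2.2, t.2.2⟩, inter_subset_left, inter_subset_right⟩
  rw [connectedComponent_eq_iInter_isClopen] at h
  obtain ⟨⟨E, hE, hxE⟩, hEU⟩ :=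
    exists_subset_nhds_of_compactSpace hdir (fun s => s.2.1.isClosed) fun y hy => hU.mem_nhds (h hy)
  exact ⟨E, hE, hxE, hEU⟩

theorem closure_connectedComponentIn_compl_inter_nonempty {X : Type*} [TopologicalSpace X]
    [CompactSpace X] [T2Space X] [PreconnectedSpace X] {F : Set X} (hF : IsClosed F)
    (hFne : F.Nonempty) {p : X} (hp : p ∉ F) :
    (closure (connectedComponentIn Fᶜ p) ∩ F).Nonempty := by
  by_contra hVF
  rw [not_nonempty_iff_eq_empty, ← disjoint_iff_inter_eq_empty] at hVF
  obtain ⟨u, v, hu, hv, hVu, hFv, huv⟩ := normal_separation isClosed_closure hF hVF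
  have : CompactSpace (vᶜ : Set X) := isCompact_iff_compactSpace.mp hv.isClosed_compl.isCompact
  let p' : (vᶜ : Set X) :=
    ⟨p, huv.subset_compl_right (hVu (subset_closure (mem_connectedComponentIn hp)))⟩
  have hcomp : connectedComponent p' ⊆ Subtype.val ⁻¹' u := by
    refine fun y hy => hVu (subset_closure ?_)
    refine (isPreconnected_connectedComponent.image _ continuous_subtype_val.continuousOn
      ).subset_connectedComponentIn ⟨p', mem_connectedComponent, rfl⟩ ?_ ⟨y, hy, rfl⟩
    rintro _ ⟨z, -, rfl⟩
    exact fun hz => z.2 (hFv hz)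
  obtain ⟨E, hE, hpE, hEu⟩ :=
    exists_isClopen_of_connectedComponent_subset (hu.preimage continuous_subtype_val) hcomp
  obtain ⟨O, hO, rfl⟩ := isOpen_induced_iff.mp hE.isOpen
  have himage : Subtype.val '' (Subtype.val ⁻¹' O : Set (vᶜ : Set X)) = O ∩ u := by
    ext y
    exact ⟨by rintro ⟨z, hz, rfl⟩; exact ⟨hz, hEu hz⟩,
      fun hy => ⟨⟨y, huv.subset_compl_right hy.2⟩, hy.1, rfl⟩⟩
  have hclopen : IsClopen (O ∩ u) :=
    ⟨himage ▸ hv.isClosed_compl.isClosedEmbedding_subtypeVal.isClosedMap _ hE.isClosed,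
      hO.inter hu⟩
  obtain ⟨q, hq⟩ := hFne
  have hqu : q ∈ O ∩ u := hclopen.eq_univ ⟨p, hpE, hEu hpE⟩ ▸ mem_univ q
  exact disjoint_left.mp huv hqu.2 (hFv hq)

structure IsFlatExtension {X : Type*} [TopologicalSpace X] (F : Set X) (f g : X → ℝ) : Prop where
  continuous : Continuous g
  eqOn : EqOn g f F
  flat : ∀ x ∈ Fᶜ, ∀ y ∈ connectedComponentIn Fᶜ x, g y = g x

theorem IsFlatExtension.apply_eq_of_eventually {X : Type*} [TopologicalSpace X]
    [CompactSpace X] [T2Space X] [PreconnectedSpace X] {F : Set X} {f g φ : X → ℝ}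
    (hg : IsFlatExtension F f g) (hF : IsClosed F) (hFne : F.Nonempty)
    (hφ : ∀ x ∉ F, ∀ᶠ y in 𝓝 x, φ y = φ x) (hφF : ∀ z ∈ F, ∀ᶠ y in 𝓝 z, y ∉ F → φ y = f z)
    {x : X} (hx : x ∉ F) : g x = φ x := by
  obtain ⟨z, hzV, hzF⟩ := closure_connectedComponentIn_compl_inter_nonempty hF hFne hx
  have hgz : g z = g x :=
    closure_minimal (fun y hy => hg.flat x hx y hy) (isClosed_eq hg.continuous continuous_const) hzV
  obtain ⟨y, hyV, hyz⟩ :=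
    ((mem_closure_iff_frequently.mp hzV).and_eventually (hφF z hzF)).exists
  have hyF : y ∉ F := connectedComponentIn_subset _ _ hyV
  have hφV : φ y = φ x := eq_of_germ_isConstant_on
    (fun w hw => ⟨φ w, hφ w (connectedComponentIn_subset _ _ hw)⟩)
    isPreconnected_connectedComponentIn hyV (mem_connectedComponentIn hx)
  rw [← hgz, hg.eqOn hzF, ← hyz hyF, hφV]

theorem eventually_notMem_imp_mem_frontier {X : Type*} [TopologicalSpace X] {s : Set X} {x : X}
    (hx : x ∈ s) : ∀ᶠ y in 𝓝 x, y ∉ s → x ∈ frontier s := by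
  by_cases hxi : x ∈ interior s
  · filter_upwards [isOpen_interior.mem_nhds hxi] with y hy hys
    exact absurd (interior_subset hy) hys
  · exact Eventually.of_forall fun _ _ => ⟨subset_closure hx, hxi⟩

theorem eventually_forall_mem_imp_mem {M ι : Type*} [TopologicalSpace M] [Finite ι] {C : ι → Set M}
    (hclosed : ∀ i, IsClosed (C i)) (x : M) :
    ∀ᶠ y in 𝓝 x, ∀ j, y ∈ C j → x ∈ C j := by
  refine eventually_all.mpr fun j => ?_
  by_cases hx : x ∈ C j
  · exact Eventually.of_forall fun _ _ => hx
  · filter_upwards [(hclosed j).isOpen_compl.mem_nhds hx] with y hy hyj using absurd hyj hy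

section Lens

variable {M : Type*} {ι : Type*} [LinearOrder ι] {C : ι → Set M}

def IsNextMem (C : ι → Set M) (i : ι) (x : M) (n : ι) : Prop :=
  i < n ∧ x ∈ C n ∧ ∀ j, i < j → x ∈ C j → n ≤ j

open Classical in
/-- Off `lensSupport C i`, every flat extension of `lam` over it equals this function. -/
noncomputable def stepValue (C : ι → Set M) (c : ι → ℝ) (i : ι) (x : M) : ℝ :=
  if h : x ∈ C i ∧ ∃ n, IsNextMem C i x n then c h.2.choose else c i

theorem IsNextMem.unique {i n m : ι} {x : M} (hn : IsNextMem C i x n) (hm : IsNextMem C i x m) :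
    n = m :=
  le_antisymm (hn.2.2 m hm.1 hm.2.1) (hm.2.2 n hn.1 hn.2.1)

theorem exists_isNextMem [Finite ι] {i : ι} {x : M} (h : ∃ j, i < j ∧ x ∈ C j) :
    ∃ n, IsNextMem C i x n := by
  obtain ⟨n, hn, hmin⟩ := wellFounded_lt.has_min {j | i < j ∧ x ∈ C j} h
  exact ⟨n, hn.1, hn.2, fun j hij hxj => not_lt.mp (hmin j ⟨hij, hxj⟩)⟩

theorem stepValue_of_notMem {c : ι → ℝ} {i : ι} {x : M} (hx : x ∉ C i) :
    stepValue C c i x = c i :=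
  dif_neg fun h => hx h.1

theorem IsNextMem.stepValue_eq {c : ι → ℝ} {i n : ι} {x : M} (hn : IsNextMem C i x n)
    (hx : x ∈ C i) : stepValue C c i x = c n := by
  have h : x ∈ C i ∧ ∃ n, IsNextMem C i x n := ⟨hx, n, hn⟩
  rw [stepValue, dif_pos h, h.2.choose_spec.unique hn]

theorem subset_of_lt_of_mem (hnest : ∀ i j, i < j → C j ⊂ C i ∨ C i ∩ C j = ∅) {i j : ι}
    (hij : i < j) {x : M} (hi : x ∈ C i) (hj : x ∈ C j) : C j ⊆ C i :=
  (hnest i j hij).elim (fun h => h.subset) fun h => absurd (h ▸ ⟨hi, hj⟩ : x ∈ (∅ : Set M)) id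

theorem IsNextMem.eq_of_mem (hnest : ∀ i j, i < j → C j ⊂ C i ∨ C i ∩ C j = ∅) {i n m : ι}
    {x y : M} (hx : IsNextMem C i x n) (hy : IsNextMem C i y m) (hxm : x ∈ C m) : m = n := by
  refine (lt_or_eq_of_le (hx.2.2 m hy.1 hxm)).elim (fun hnm => ?_) Eq.symm
  exact absurd hnm (not_lt.mpr (hy.2.2 n hx.1 (subset_of_lt_of_mem hnest hnm hx.2.1 hxm hy.2.1)))

theorem le_of_nested_of_eq_univ (hnest : ∀ i j, i < j → C j ⊂ C i ∨ C i ∩ C j = ∅) {i₀ i : ι}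
    (hroot : C i₀ = univ) (hi : (C i).Nonempty) : i₀ ≤ i := by
  refine not_lt.mp fun hlt => ?_
  rcases hnest i i₀ hlt with h | h
  · exact (hroot ▸ h).2 (subset_univ _)
  · rw [hroot, inter_univ] at h
    exact hi.ne_empty h

variable [TopologicalSpace M]

def lensSupport (C : ι → Set M) (i : ι) : Set M := closure (C i \ ⋃ j > i, C j)

theorem lensSupport_subset {i : ι} (hi : IsClosed (C i)) : lensSupport C i ⊆ C i :=
  closure_minimal sdiff_subset hi

theorem exists_isNextMem_of_notMem_lensSupport [Finite ι] {i : ι} {x : M} (hx : x ∈ C i)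
    (hxD : x ∉ lensSupport C i) : ∃ n, IsNextMem C i x n := by
  refine exists_isNextMem ?_
  by_contra h
  exact hxD (subset_closure ⟨hx, by simpa using h⟩)

theorem mem_frontier_of_mem_lensSupport {i j : ι} (hij : i < j) {x : M}
    (hx : x ∈ lensSupport C i) (hxj : x ∈ C j) : x ∈ frontier (C j) := by
  rw [frontier_eq_closure_inter_closure]
  exact ⟨subset_closure hxj, closure_mono (fun y hy hyj => hy.2 (mem_biUnion hij hyj)) hx⟩

theorem mem_frontier_of_lt_of_mem_frontier (hnest : ∀ i j, i < j → C j ⊂ C i ∨ C i ∩ C j = ∅)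
    {i j : ι} (hi : IsClosed (C i)) (hij : i < j) {x : M} (hx : x ∈ frontier (C i))
    (hxj : x ∈ C j) : x ∈ frontier (C j) := by
  rw [frontier_eq_closure_inter_closure] at hx ⊢
  have hsub := subset_of_lt_of_mem hnest hij (hi.closure_subset hx.1) hxj
  exact ⟨subset_closure hxj, closure_mono (compl_subset_compl.mpr hsub) hx.2⟩

theorem stepValue_eventually_eq [Finite ι] (hclosed : ∀ i, IsClosed (C i))
    (hnest : ∀ i j, i < j → C j ⊂ C i ∨ C i ∩ C j = ∅) {lam : M → ℝ} {c : ι → ℝ}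
    (hc : ∀ i, ∀ z ∈ frontier (C i), lam z = c i) {i : ι} {x : M}
    (hx : x ∉ lensSupport C i) : ∀ᶠ y in 𝓝 x, stepValue C c i y = stepValue C c i x := by
  by_cases hxC : x ∈ C i
  swap
  · filter_upwards [(hclosed i).isOpen_compl.mem_nhds hxC] with y hy
    rw [stepValue_of_notMem hy, stepValue_of_notMem hxC]
  obtain ⟨n, hn⟩ := exists_isNextMem_of_notMem_lensSupport hxC hx
  filter_upwards [isClosed_closure.isOpen_compl.mem_nhds hx,
    eventually_forall_mem_imp_mem hclosed x, eventually_notMem_imp_mem_frontier hxC]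
    with y hyD hyx hyfr
  rw [hn.stepValue_eq hxC]
  by_cases hyC : y ∈ C i
  · obtain ⟨m, hm⟩ := exists_isNextMem_of_notMem_lensSupport hyC hyD
    rw [hm.stepValue_eq hyC, hn.eq_of_mem hnest hm (hyx m hm.2.1)]
  · have hxn := mem_frontier_of_lt_of_mem_frontier hnest (hclosed i) hn.1 (hyfr hyC) hn.2.1
    rw [stepValue_of_notMem hyC, ← hc i x (hyfr hyC), hc n x hxn]

theorem stepValue_eventually_eq_of_mem_lensSupport [Finite ι] (hclosed : ∀ i, IsClosed (C i))
    {lam : M → ℝ} {c : ι → ℝ} (hc : ∀ i, ∀ z ∈ frontier (C i), lam z = c i) {i : ι} {z : M}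
    (hz : z ∈ lensSupport C i) :
    ∀ᶠ y in 𝓝 z, y ∉ lensSupport C i → stepValue C c i y = lam z := by
  have hzC := lensSupport_subset (hclosed i) hz
  filter_upwards [eventually_forall_mem_imp_mem hclosed z,
    eventually_notMem_imp_mem_frontier hzC] with y hyz hyfr hyD
  by_cases hyC : y ∈ C i
  · obtain ⟨m, hm⟩ := exists_isNextMem_of_notMem_lensSupport hyC hyD
    rw [hm.stepValue_eq hyC, hc m z (mem_frontier_of_mem_lensSupport hm.1 hz (hyz m hm.2.1))]
  · rw [stepValue_of_notMem hyC, hc i z (hyfr hyC)]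

theorem IsPreconnected.exists_subset_of_nested_cover (hclosed : ∀ i, IsClosed (C i))
    (hnest : ∀ i j, i < j → C j ⊂ C i ∨ C i ∩ C j = ∅) {s : Set M} (hs : IsPreconnected s)
    (hne : s.Nonempty) (S : Finset ι) (hsS : s ⊆ ⋃ j ∈ S, C j) : ∃ j ∈ S, s ⊆ C j := by
  classical
  induction S using Finset.induction_on_min with
  | empty => exact absurd (hsS hne.some_mem) (by simp)
  | insert a S haS ih =>
    set U := ⋃ j ∈ S.filter (fun j => C a ∩ C j = ∅), C j
    have hcover : s ⊆ C a ∪ U := by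
      intro y hy
      obtain ⟨j, hj, hyj⟩ := mem_iUnion₂.mp (hsS hy)
      rcases Finset.mem_insert.mp hj with rfl | hjS
      · exact Or.inl hyj
      rcases hnest a j (haS j hjS) with h | h
      · exact Or.inl (h.subset hyj)
      · exact Or.inr (mem_biUnion (Finset.mem_filter.mpr ⟨hjS, h⟩) hyj)
    have hdisj : s ∩ (C a ∩ U) = ∅ := by
      refine eq_empty_of_forall_notMem fun y ⟨_, hya, hyU⟩ => ?_
      obtain ⟨j, hj, hyj⟩ := mem_iUnion₂.mp hyU
      exact (Finset.mem_filter.mp hj).2.subset ⟨hya, hyj⟩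
    have hUclosed : IsClosed U := (Finset.finite_toSet _).isClosed_biUnion fun j _ => hclosed j
    rcases isPreconnected_iff_subset_of_disjoint_closed.mp hs _ _ (hclosed a) hUclosed hcover
      hdisj with h | h
    · exact ⟨a, Finset.mem_insert_self _ _, h⟩
    · have hUS : U ⊆ ⋃ j ∈ S, C j :=
        biUnion_subset_biUnion_left (Finset.coe_subset.mpr (Finset.filter_subset _ _))
      obtain ⟨j, hj, hsj⟩ := ih (h.trans hUS)
      exact ⟨j, Finset.mem_insert_of_mem hj, hsj⟩

theorem lensSupport_nonempty [Finite ι] (hclosed : ∀ i, IsClosed (C i))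
    (hnest : ∀ i j, i < j → C j ⊂ C i ∨ C i ∩ C j = ∅) {i : ι} (hi : IsConnected (C i)) :
    (lensSupport C i).Nonempty := by
  cases nonempty_fintype ι
  refine Nonempty.mono subset_closure (nonempty_iff_ne_empty.mpr fun h => ?_)
  have hcover : C i ⊆ ⋃ j ∈ Finset.univ.filter (i < ·), C j := by
    simpa [sdiff_eq_empty] using h
  obtain ⟨j, hj, hij⟩ := hi.isPreconnected.exists_subset_of_nested_cover hclosed hnest
    hi.nonempty _ hcover
  rcases hnest i j (Finset.mem_filter.mp hj).2 with h | h
  · exact h.2 hij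
  · obtain ⟨x, hx⟩ := hi.nonempty
    exact h.subset ⟨hx, hij hx⟩

theorem IsFlatExtension.eq_stepValue [CompactSpace M] [T2Space M] [PreconnectedSpace M]
    [Finite ι] (hclosed : ∀ i, IsClosed (C i))
    (hnest : ∀ i j, i < j → C j ⊂ C i ∨ C i ∩ C j = ∅) {lam : M → ℝ} {c : ι → ℝ}
    (hc : ∀ i, ∀ z ∈ frontier (C i), lam z = c i) {i : ι} (hi : IsConnected (C i)) {g : M → ℝ}
    (hg : IsFlatExtension (lensSupport C i) lam g) {x : M} (hx : x ∉ lensSupport C i) :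
    g x = stepValue C c i x :=
  hg.apply_eq_of_eventually isClosed_closure (lensSupport_nonempty hclosed hnest hi)
    (fun _ hy => stepValue_eventually_eq hclosed hnest hc hy)
    (fun _ hz => stepValue_eventually_eq_of_mem_lensSupport hclosed hc hz) hx

theorem IsFlatExtension.apply_eq_of_isNextMem [CompactSpace M] [T2Space M] [PreconnectedSpace M]
    [Finite ι] (hclosed : ∀ i, IsClosed (C i))
    (hnest : ∀ i j, i < j → C j ⊂ C i ∨ C i ∩ C j = ∅) {lam : M → ℝ} {c : ι → ℝ}
    (hc : ∀ i, ∀ z ∈ frontier (C i), lam z = c i) {i n : ι} (hi : IsConnected (C i))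
    {g : M → ℝ} (hg : IsFlatExtension (lensSupport C i) lam g) {x : M} (hx : x ∈ C i)
    (hn : IsNextMem C i x n) : g x = c n := by
  by_cases hxD : x ∈ lensSupport C i
  · rw [hg.eqOn hxD, hc n x (mem_frontier_of_mem_lensSupport hn.1 hxD hn.2.1)]
  · rw [hg.eq_stepValue hclosed hnest hc hi hxD, hn.stepValue_eq hx]

theorem IsFlatExtension.apply_eq_of_notMem [CompactSpace M] [T2Space M] [PreconnectedSpace M]
    [Finite ι] (hclosed : ∀ i, IsClosed (C i))
    (hnest : ∀ i j, i < j → C j ⊂ C i ∨ C i ∩ C j = ∅) {lam : M → ℝ} {c : ι → ℝ}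
    (hc : ∀ i, ∀ z ∈ frontier (C i), lam z = c i) {i : ι} (hi : IsConnected (C i))
    {g : M → ℝ} (hg : IsFlatExtension (lensSupport C i) lam g) {x : M} (hx : x ∉ C i) :
    g x = c i := by
  rw [hg.eq_stepValue hclosed hnest hc hi fun hxD => hx (lensSupport_subset (hclosed i) hxD),
    stepValue_of_notMem hx]

end Lens

theorem add_sum_filter_lt_sub_eq {ι : Type*} [LinearOrder ι] [Fintype ι] (P : ι → Prop)
    (f u : ι → ℝ) (L : ℝ) (htop : ∀ i, P i → (∀ j, i < j → ¬ P j) → f i = L)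
    (hstep : ∀ i n, P i → i < n → P n → (∀ j, i < j → P j → n ≤ j) → f i = u n)
    (hoff : ∀ j, ¬ P j → f j = u j) (i : ι) (hi : P i) :
    f i + ∑ j ∈ Finset.univ.filter (i < ·), (f j - u j) = L := by
  induction i using WellFoundedGT.induction with
  | _ i ih =>
  by_cases hnext : ∃ j, i < j ∧ P j
  · obtain ⟨n, ⟨hin, hn⟩, hmin⟩ := wellFounded_lt.has_min _ hnext
    have hsplit : ∀ j, (if i < j then f j - u j else 0) =
        (if n = j then f j - u j else 0) + (if n < j then f j - u j else 0) := by
      intro j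
      rcases lt_trichotomy j n with hjn | rfl | hnj
      · rw [if_neg hjn.ne', if_neg hjn.not_gt, add_zero]
        split_ifs with hij
        · rw [hoff j fun hj => hmin j ⟨hij, hj⟩ hjn, sub_self]
        · rfl
      · simp [hin]
      · simp [hin.trans hnj, hnj.ne, hnj]
    rw [Finset.sum_filter, Finset.sum_congr rfl fun j _ => hsplit j, Finset.sum_add_distrib,
      Finset.sum_ite_eq, ← Finset.sum_filter, if_pos (Finset.mem_univ _),
      hstep i n hi hin hn fun j hij hj => not_lt.mp (hmin j ⟨hij, hj⟩), ← ih n hin hn]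
    ring
  · push Not at hnext
    rw [htop i hi hnext, Finset.sum_eq_zero fun j hj => by
      rw [hoff j (hnext j (Finset.mem_filter.mp hj).2), sub_self], add_zero]

theorem additive_decomposition_general {M : Type*} [MetricSpace M] [CompactSpace M] [ConnectedSpace M]
    {ι : Type*} [Fintype ι] [LinearOrder ι]
    (C : ι → Set M)
    (hclosed : ∀ i, IsClosed (C i))
    (hconn : ∀ i, IsConnected (C i))
    (hnest : ∀ i j, i < j → C j ⊂ C i ∨ C i ∩ C j = ∅)
    (D : ι → Set M)
    (hD : ∀ i, D i = closure (C i \ ⋃ j > i, C j))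
    (lam : M → ℝ)
    (i₀ : ι) (hroot : C i₀ = Set.univ)
    (lamF : ι → M → ℝ) (hlamF_cont : ∀ i, Continuous (lamF i))
    (hlamF_agree : ∀ i, ∀ x ∈ D i, lamF i x = lam x)
    (hlamF_flat : ∀ i, ∀ x ∈ (D i)ᶜ, ∀ y ∈ connectedComponentIn (D i)ᶜ x,
      lamF i y = lamF i x)
    (c : ι → ℝ) (hc : ∀ i, i ≠ i₀ → ∀ z ∈ frontier (C i), lam z = c i) :
    ∀ p : M, lam p = lamF i₀ p + ∑ i ∈ Finset.univ.erase i₀, (lamF i p - c i) := by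
  obtain rfl : D = lensSupport C := funext hD
  have hfront : ∀ i, ∀ z ∈ frontier (C i), lam z = c i := fun i z hz =>
    hc i (by rintro rfl; simp [hroot] at hz) z hz
  have hflat : ∀ i, IsFlatExtension (lensSupport C i) lam (lamF i) := fun i =>
    ⟨hlamF_cont i, fun x hx => hlamF_agree i x hx, hlamF_flat i⟩
  have hroot_le : ∀ i, i₀ ≤ i := fun i => le_of_nested_of_eq_univ hnest hroot (hconn i).nonempty
  intro p
  have hsum := add_sum_filter_lt_sub_eq (p ∈ C ·) (lamF · p) c (lam p)
    (fun i hi hmax => hlamF_agree i p (subset_closure ⟨hi, by simpa using hmax⟩))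
    (fun i n hi hin hn hmin => (hflat i).apply_eq_of_isNextMem hclosed hnest hfront (hconn i) hi
      ⟨hin, hn, hmin⟩)
    (fun j hj => (hflat j).apply_eq_of_notMem hclosed hnest hfront (hconn j) hj)
    i₀ (hroot ▸ mem_univ p)
  rw [← hsum]
  congr 2
  ext i
  simp [lt_iff_le_and_ne, hroot_le, eq_comm]

/-- Additive Decomposition Lemma (on the middle space).  In the lens setting
with `M` connected, let `lam : M → ℝ` be constant-boundary for the lens, let
`i₀` be an index with `C i₀ = M`, and for each index `i` let `lamF i` be a flat
extension of `lam` over `D i`.  With `c i` the common value of `lam` on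
`frontier (C i)` for `i ≠ i₀`, every point `p` satisfies
`lam p = lamF i₀ p + ∑_{i ≠ i₀} (lamF i p - c i)`. -/
theorem additive_decomposition {M : Type*} [MetricSpace M] [CompactSpace M] [ConnectedSpace M]
    {ι : Type*} [Fintype ι] [LinearOrder ι]
    (C : ι → Set M)
    (hclosed : ∀ i, IsClosed (C i))
    (hconn : ∀ i, IsConnected (C i))
    (hint : ∀ i, (interior (C i)).Nonempty)
    (hnest : ∀ i j, i < j → C j ⊂ C i ∨ C i ∩ C j = ∅)
    (hcover : ⋃ i, C i = Set.univ)
    (D : ι → Set M)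
    (hD : ∀ i, D i = closure (C i \ ⋃ j > i, C j))
    (lam : M → ℝ) (hlamc : Continuous lam)
    (hlamcb : ∀ k, ∀ x ∈ frontier (C k), ∀ y ∈ frontier (C k), lam x = lam y)
    (i₀ : ι) (hroot : C i₀ = Set.univ)
    (lamF : ι → M → ℝ) (hlamF_cont : ∀ i, Continuous (lamF i))
    (hlamF_agree : ∀ i, ∀ x ∈ D i, lamF i x = lam x)
    (hlamF_flat : ∀ i, ∀ x ∈ (D i)ᶜ, ∀ y ∈ connectedComponentIn (D i)ᶜ x,
      lamF i y = lamF i x)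
    (c : ι → ℝ) (hc : ∀ i, i ≠ i₀ → ∀ z ∈ frontier (C i), lam z = c i) :
    ∀ p : M, lam p = lamF i₀ p + ∑ i ∈ Finset.univ.erase i₀, (lamF i p - c i) :=
  additive_decomposition_general C hclosed hconn hnest D hD lam i₀ hroot lamF hlamF_cont hlamF_agree
    hlamF_flat c hc
end

section
/- Assume the lens setting with M connected, and let λ : M → ℝ be constant-boundary for the lens. Suppose i₀ is an index with C i₀ = M, for every index i let λ_i : M → ℝ be a flat extension of λ over D i, and let b : ι → ℝ be arbitrary coefficients. Define h : M → ℝ by h(p) = b_{i₀}·λ_{i₀}(p) + Σ_{i ≠ i₀} b_i·(λ_i(p) − c_i(λ)). Then for every index i there is a constant k_i ∈ ℝ such that h(p) = b_i·λ(p) + k_i for every p ∈ D i; moreover k_{i₀} = 0, i.e. h agrees with b_{i₀}·λ on D i₀. -/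
/-!
For `j ≠ i`, the flat extension `λ_j` is constant on the support `D i`. The complement of `D j` is
covered by finitely many closed pieces: the closure of the outside of `C j` and the maximal
children of `C j`, each bounded by a frontier on which `λ` takes a single value, and two pieces
meet only on frontiers. For `x ∉ D j`, `λ_j` is constant on the closure `K` of the component of
`x` in the complement of `D j`; by the boundary bumping theorem in the compact connected space
`M`, `K` meets `D j`, and since `K` is connected the value of `λ_j` on `K` is the boundary value
of every piece that `K` meets. Finally `D i` lies in a single piece: outside `C j` if `j < i`
or `C i ∩ C j = ∅`, inside a maximal child if `C i ⊂ C j`. So on `D i` the combination `h`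
differs from `b i * λ` by a constant, and on `D i₀` each term `λ_j - c_j` vanishes.
-/

open Set

section Topology

variable {X : Type*} [TopologicalSpace X]

theorem IsPreconnected.eq_of_isClosed_cover {β κ : Type*} [Finite κ] {K A : Set X}
    {F : κ → Set X} {w : κ → β} {v : β} (hK : IsPreconnected K) (hA : IsClosed A)
    (hF : ∀ a, IsClosed (F a)) (hcover : K ⊆ A ∪ ⋃ a, F a)
    (hAF : ∀ a, (K ∩ A ∩ F a).Nonempty → w a = v)
    (hFF : ∀ a b, (K ∩ F a ∩ F b).Nonempty → w a = w b)
    (hKA : (K ∩ A).Nonempty) {a : κ} (ha : (K ∩ F a).Nonempty) : w a = v := by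
  by_contra hav
  have hgood : IsClosed (A ∪ ⋃ (b) (_ : w b = v), F b) :=
    hA.union (isClosed_iUnion_of_finite fun b => isClosed_iUnion_of_finite fun _ => hF b)
  have hbad : IsClosed (⋃ (b) (_ : w b ≠ v), F b) :=
    isClosed_iUnion_of_finite fun b => isClosed_iUnion_of_finite fun _ => hF b
  have hsplit : K ⊆ (A ∪ ⋃ (b) (_ : w b = v), F b) ∪ ⋃ (b) (_ : w b ≠ v), F b := by
    intro y hy
    rcases hcover hy with hyA | hyF
    · exact Or.inl (Or.inl hyA)
    · obtain ⟨b, hyb⟩ := mem_iUnion.mp hyF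
      by_cases hb : w b = v
      · exact Or.inl (Or.inr (mem_biUnion hb hyb))
      · exact Or.inr (mem_biUnion hb hyb)
  obtain ⟨y, hyK, hy_good, hy_bad⟩ := isPreconnected_closed_iff.mp hK _ _ hgood hbad hsplit
    (hKA.mono (inter_subset_inter_right _ subset_union_left))
    (ha.mono (inter_subset_inter_right _ (subset_biUnion_of_mem (u := F) hav)))
  obtain ⟨b, hbv, hyb⟩ := mem_iUnion₂.mp hy_bad
  rcases hy_good with hyA | hy_good
  · exact hbv (hAF b ⟨y, ⟨hyK, hyA⟩, hyb⟩)
  · obtain ⟨b', hb'v, hyb'⟩ := mem_iUnion₂.mp hy_good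
    exact hbv (hFF b b' ⟨y, ⟨hyK, hyb⟩, hyb'⟩ ▸ hb'v)

theorem exists_isClopen_mem_subset_of_connectedComponent_subset [T2Space X] [CompactSpace X]
    {x : X} {U : Set X} (hU : IsOpen U) (hxU : connectedComponent x ⊆ U) :
    ∃ V, IsClopen V ∧ x ∈ V ∧ V ⊆ U := by
  have hdir : Directed (· ⊇ ·) fun s : { s : Set X // IsClopen s ∧ x ∈ s } => s.1 :=
    fun s t => ⟨⟨s.1 ∩ t.1, s.2.1.inter t.2.1, s.2.2, t.2.2⟩, inter_subset_left,
      inter_subset_right⟩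
  have : Nonempty { s : Set X // IsClopen s ∧ x ∈ s } := ⟨⟨univ, isClopen_univ, mem_univ x⟩⟩
  obtain ⟨s, hs⟩ := exists_subset_nhds_of_compactSpace hdir (fun s => s.2.1.1) fun y hy =>
    hU.mem_nhds (hxU ((connectedComponent_eq_iInter_isClopen x).symm ▸ hy))
  exact ⟨s.1, s.2.1, s.2.2, hs⟩

theorem IsClopen.image_val_of_subset_preimage {u : Set X} (hu : IsOpen u)
    {V : Set (closure u)} (hV : IsClopen V) (hVu : V ⊆ Subtype.val ⁻¹' u) :
    IsClopen (Subtype.val '' V) := by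
  obtain ⟨W, hW, hWV⟩ := isOpen_induced_iff.mp hV.isOpen
  have hV_eq : Subtype.val '' V = W ∩ u := by
    ext z
    constructor
    · rintro ⟨w, hw, rfl⟩
      exact ⟨(hWV.symm ▸ hw : w ∈ Subtype.val ⁻¹' W), hVu hw⟩
    · rintro ⟨hzW, hzu⟩
      exact ⟨⟨z, subset_closure hzu⟩, hWV ▸ hzW, rfl⟩
  exact ⟨isClosed_closure.isClosedEmbedding_subtypeVal.isClosedMap _ hV.isClosed,
    hV_eq ▸ hW.inter hu⟩

theorem closure_connectedComponentIn_diff_nonempty [T2Space X] [CompactSpace X]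
    [ConnectedSpace X] {G : Set X} (hG : IsOpen G) (hG_ne : G ≠ univ) {x : X} (hx : x ∈ G) :
    (closure (connectedComponentIn G x) \ G).Nonempty := by
  set K := connectedComponentIn G x
  by_contra hK
  -- then `K` is closed, and a clopen neighbourhood of `K` in the compact space `closure u ⊆ G`
  -- that stays inside the open set `u` is clopen in `X`
  have hKG : closure K ⊆ G := sdiff_eq_empty.mp (not_nonempty_iff_eq_empty.mp hK)
  have hK_closed : IsClosed K := isClosed_of_closure_subset <|
    isPreconnected_connectedComponentIn.closure.subset_connectedComponentIn
      (subset_closure (mem_connectedComponentIn hx)) hKG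
  obtain ⟨u, hu, hKu, huG⟩ := normal_exists_closure_subset hK_closed hG (subset_closure.trans hKG)
  have : CompactSpace (closure u) := isCompact_iff_compactSpace.mp isClosed_closure.isCompact
  let y : closure u := ⟨x, subset_closure (hKu (mem_connectedComponentIn hx))⟩
  have hy : connectedComponent y ⊆ Subtype.val ⁻¹' u := by
    intro z hz
    apply hKu
    refine isPreconnected_connectedComponent.image _ continuous_subtype_val.continuousOn
      |>.subset_connectedComponentIn ⟨y, mem_connectedComponent, rfl⟩ ?_ ⟨z, hz, rfl⟩
    rintro _ ⟨w, -, rfl⟩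
    exact huG w.2
  obtain ⟨V, hV, hyV, hVu⟩ :=
    exists_isClopen_mem_subset_of_connectedComponent_subset (hu.preimage continuous_subtype_val) hy
  have hV_clopen := hV.image_val_of_subset_preimage hu hVu
  apply hG_ne
  refine eq_univ_of_univ_subset ?_
  rw [← hV_clopen.eq_univ ⟨x, y, hyV, rfl⟩]
  rintro _ ⟨w, hw, rfl⟩
  exact huG (subset_closure (hVu hw))

end Topology

namespace Lens

variable {M ι : Type*} [LinearOrder ι] {C : ι → Set M} {i j s t : ι} {x : M}

def IsMaxChild (C : ι → Set M) (j t : ι) : Prop :=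
  j < t ∧ C t ⊂ C j ∧ ∀ s, j < s → C s ⊂ C j → ¬ C t ⊂ C s

theorem exists_isMaxChild [Finite ι] (h : j < t) (hsub : C t ⊂ C j) :
    ∃ s, IsMaxChild C j s ∧ C t ⊆ C s := by
  obtain ⟨s, ⟨hjs, hsj, hts⟩, hmax⟩ :=
    (toFinite {s | j < s ∧ C s ⊂ C j ∧ C t ⊆ C s}).exists_maximalFor C _ ⟨t, h, hsub, subset_rfl⟩
  exact ⟨s, ⟨hjs, hsj, fun r hjr hrj hsr => hsr.2 (hmax ⟨hjr, hrj, hts.trans hsr.1⟩ hsr.1)⟩, hts⟩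

theorem IsMaxChild.eq_of_mem (hnest : ∀ i j, i < j → C j ⊂ C i ∨ C i ∩ C j = ∅)
    (ht : IsMaxChild C j t) (hs : IsMaxChild C j s) (hxt : x ∈ C t) (hxs : x ∈ C s) :
    t = s := by
  by_contra hts
  rcases lt_or_gt_of_ne hts with hlt | hlt
  · exact (hnest t s hlt).elim (hs.2.2 t ht.1 ht.2.1) fun h => h.subset ⟨hxt, hxs⟩
  · exact (hnest s t hlt).elim (ht.2.2 s hs.1 hs.2.1) fun h => h.subset ⟨hxs, hxt⟩

theorem lt_of_eq_univ (hnest : ∀ i j, i < j → C j ⊂ C i ∨ C i ∩ C j = ∅) (hne : (C j).Nonempty)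
    (hroot : C i = univ) (hji : j ≠ i) : i < j := by
  refine hji.lt_or_gt.resolve_left fun hlt => ?_
  rcases hnest j i hlt with hsub | hdisj
  · exact hsub.2 (hroot ▸ subset_univ _)
  · exact hne.ne_empty (by rwa [hroot, inter_univ] at hdisj)

variable [TopologicalSpace M]

def support (C : ι → Set M) (i : ι) : Set M := closure (C i \ ⋃ j > i, C j)

/-- The complement of `support C j` is covered by the pieces `piece C j a`: `none` stands for the
outside of `C j`, `some t` for the maximal child `C t`; the piece `a` is bounded by the frontier
of `C (a.getD j)`. -/
def piece (C : ι → Set M) (j : ι) : Option ι → Set M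
  | none => closure (C j)ᶜ
  | some t => {x | IsMaxChild C j t ∧ x ∈ C t}

theorem isClosed_support : IsClosed (support C i) := isClosed_closure

theorem support_subset (hC : IsClosed (C i)) : support C i ⊆ C i :=
  closure_minimal sdiff_subset hC

theorem support_subset_closure_compl (h : i < j) : support C i ⊆ closure (C j)ᶜ :=
  closure_mono fun _ hx hxj => hx.2 (mem_biUnion h hxj)

theorem isClosed_piece (hclosed : ∀ i, IsClosed (C i)) : ∀ a, IsClosed (piece C j a)
  | none => isClosed_closure
  | some t => by
    by_cases ht : IsMaxChild C j t
    · simpa [piece, ht] using hclosed t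
    · simp [piece, ht]

theorem exists_isMaxChild_mem [Finite ι] (hnest : ∀ i j, i < j → C j ⊂ C i ∨ C i ∩ C j = ∅)
    (hx : x ∈ C j) (hxD : x ∉ support C j) : ∃ t, IsMaxChild C j t ∧ x ∈ C t := by
  obtain ⟨t, hjt, hxt⟩ : ∃ t > j, x ∈ C t := by
    by_contra! h
    exact hxD (subset_closure ⟨hx, by simpa using h⟩)
  rcases hnest j t hjt with hsub | hdisj
  · obtain ⟨s, hs, hts⟩ := exists_isMaxChild hjt hsub
    exact ⟨s, hs, hts hxt⟩
  · exact (hdisj.subset ⟨hx, hxt⟩).elim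

theorem support_union_iUnion_piece [Finite ι]
    (hnest : ∀ i j, i < j → C j ⊂ C i ∨ C i ∩ C j = ∅) :
    support C j ∪ ⋃ a, piece C j a = univ := by
  refine eq_univ_of_forall fun x => ?_
  by_cases hx : x ∈ C j
  · by_cases hxD : x ∈ support C j
    · exact Or.inl hxD
    · obtain ⟨t, ht, hxt⟩ := exists_isMaxChild_mem hnest hx hxD
      exact Or.inr (mem_iUnion.mpr ⟨some t, ht, hxt⟩)
  · exact Or.inr (mem_iUnion.mpr ⟨none, subset_closure hx⟩)

theorem support_inter_piece_subset_frontier (hC : IsClosed (C j)) :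
    ∀ a, support C j ∩ piece C j a ⊆ frontier (C (a.getD j))
  | none, _, ⟨hxD, hx⟩ => by
    rw [frontier_eq_closure_inter_closure]
    exact ⟨subset_closure (support_subset hC hxD), hx⟩
  | some _, _, ⟨hxD, ht, hxt⟩ => by
    rw [frontier_eq_closure_inter_closure]
    exact ⟨subset_closure hxt, support_subset_closure_compl ht.1 hxD⟩

theorem mem_frontier_of_mem_piece_of_ne (hnest : ∀ i j, i < j → C j ⊂ C i ∨ C i ∩ C j = ∅) :
    ∀ {a b}, x ∈ piece C j a → x ∈ piece C j b → a ≠ b → x ∈ frontier (C (a.getD j))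
  | none, none, _, _, hab => (hab rfl).elim
  | none, some _, hx, ⟨ht, hxt⟩, _ => by
    rw [frontier_eq_closure_inter_closure]
    exact ⟨subset_closure (ht.2.1.subset hxt), hx⟩
  | some _, none, ⟨ht, hxt⟩, hx, _ => by
    rw [frontier_eq_closure_inter_closure]
    exact ⟨subset_closure hxt, closure_mono (compl_subset_compl.mpr ht.2.1.subset) hx⟩
  | some _, some _, ⟨ht, hxt⟩, ⟨hs, hxs⟩, hab =>
    (hab (congrArg some (ht.eq_of_mem hnest hs hxt hxs))).elim

theorem support_nonempty [Finite ι] (hclosed : ∀ i, IsClosed (C i)) (hconn : IsConnected (C j))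
    (hnest : ∀ i j, i < j → C j ⊂ C i ∨ C i ∩ C j = ∅) : (support C j).Nonempty := by
  by_contra hD
  have hmem : ∀ {y}, y ∈ C j → ∃ t, IsMaxChild C j t ∧ y ∈ C t := fun hy =>
    exists_isMaxChild_mem hnest hy fun hyD => hD ⟨_, hyD⟩
  obtain ⟨x, hx⟩ := hconn.nonempty
  obtain ⟨s, hs, hxs⟩ := hmem hx
  obtain ⟨y, hyj, hys⟩ := exists_of_ssubset hs.2.1
  obtain ⟨t, ht, hyt⟩ := hmem hyj
  -- the connected set `C j` is covered by its disjoint closed maximal children, so meets only one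
  have hts : t = s := hconn.isPreconnected.eq_of_isClosed_cover (w := id) (hclosed s)
    (fun t => isClosed_piece hclosed (some t))
    (fun y hy => Or.inr (mem_iUnion.mpr (hmem hy)))
    (fun r ⟨_, ⟨_, hzs⟩, hr, hzr⟩ => hr.eq_of_mem hnest hs hzr hzs)
    (fun r r' ⟨_, ⟨_, hr, hzr⟩, hr', hzr'⟩ => hr.eq_of_mem hnest hr' hzr hzr')
    ⟨x, hx, hxs⟩ ⟨y, hyj, ht, hyt⟩
  exact hys (hts ▸ hyt)

end Lens

section FlatExtension

open Lens

variable {M β : Type*} [TopologicalSpace M] [TopologicalSpace β]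

structure IsFlatExtension_s9 (lam : M → β) (S : Set M) (f : M → β) : Prop where
  continuous : Continuous f
  eqOn : EqOn f lam S
  eq_of_mem_connectedComponentIn : ∀ x ∈ Sᶜ, ∀ y ∈ connectedComponentIn Sᶜ x, f y = f x

variable {lam f : M → β} {S : Set M} {x y : M}

theorem IsFlatExtension_s9.eq_of_mem_closure_connectedComponentIn [T2Space β]
    (hf : IsFlatExtension_s9 lam S f) (hx : x ∉ S) (hy : y ∈ closure (connectedComponentIn Sᶜ x)) :
    f y = f x :=
  closure_minimal (fun z hz => hf.eq_of_mem_connectedComponentIn x hx z hz)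
    (isClosed_eq hf.continuous continuous_const) hy

variable [CompactSpace M] [T2Space M] [ConnectedSpace M] [T2Space β] {ι : Type*} [LinearOrder ι]
  [Finite ι] {C : ι → Set M} {c : ι → β} {i j : ι}

theorem IsFlatExtension_s9.eq_of_mem_piece (hclosed : ∀ i, IsClosed (C i))
    (hconn : ∀ i, IsConnected (C i)) (hnest : ∀ i j, i < j → C j ⊂ C i ∨ C i ∩ C j = ∅)
    (hc : ∀ k, ∀ z ∈ frontier (C k), lam z = c k) (hf : IsFlatExtension_s9 lam (support C j) f)
    {a : Option ι} (hx : x ∈ piece C j a) : f x = c (a.getD j) := by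
  have hbd : ∀ a, ∀ y ∈ support C j ∩ piece C j a, lam y = c (a.getD j) := fun a y hy =>
    hc _ y (support_inter_piece_subset_frontier (hclosed j) a hy)
  by_cases hxD : x ∈ support C j
  · rw [hf.eqOn hxD]
    exact hbd a x ⟨hxD, hx⟩
  -- `f` equals `f x` on the closure `K` of the component of `x`, which reaches the support
  set K := closure (connectedComponentIn (support C j)ᶜ x)
  obtain ⟨z, hzK, hzD⟩ := closure_connectedComponentIn_diff_nonempty isClosed_support.isOpen_compl
    (compl_ne_univ.mpr (support_nonempty hclosed (hconn j) hnest)) hxD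
  refine (isPreconnected_connectedComponentIn.closure.eq_of_isClosed_cover (K := K)
    (w := fun a => c (a.getD j)) isClosed_support (isClosed_piece hclosed)
    (by rw [support_union_iUnion_piece hnest]; exact subset_univ _) ?_ ?_
    ⟨z, hzK, notMem_compl_iff.mp hzD⟩ ⟨x, subset_closure (mem_connectedComponentIn hxD), hx⟩).symm
  · rintro b ⟨y, ⟨hyK, hyD⟩, hyb⟩
    rw [← hbd b y ⟨hyD, hyb⟩, ← hf.eqOn hyD, hf.eq_of_mem_closure_connectedComponentIn hxD hyK]
  · rintro b b' ⟨y, ⟨-, hyb⟩, hyb'⟩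
    rcases eq_or_ne b b' with rfl | hne
    · rfl
    rw [← hc _ y (mem_frontier_of_mem_piece_of_ne hnest hyb hyb' hne),
      hc _ y (mem_frontier_of_mem_piece_of_ne hnest hyb' hyb hne.symm)]

theorem IsFlatExtension_s9.eq_on_support_of_lt (hclosed : ∀ i, IsClosed (C i))
    (hconn : ∀ i, IsConnected (C i)) (hnest : ∀ i j, i < j → C j ⊂ C i ∨ C i ∩ C j = ∅)
    (hc : ∀ k, ∀ z ∈ frontier (C k), lam z = c k) (hf : IsFlatExtension_s9 lam (support C j) f)
    (hij : i < j) : ∀ x ∈ support C i, f x = c j := fun _ hx =>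
  hf.eq_of_mem_piece hclosed hconn hnest hc (a := none) (support_subset_closure_compl hij hx)

theorem IsFlatExtension_s9.exists_eq_on_support (hclosed : ∀ i, IsClosed (C i))
    (hconn : ∀ i, IsConnected (C i)) (hnest : ∀ i j, i < j → C j ⊂ C i ∨ C i ∩ C j = ∅)
    (hc : ∀ k, ∀ z ∈ frontier (C k), lam z = c k) (hf : IsFlatExtension_s9 lam (support C j) f)
    (hij : i ≠ j) : ∃ v, ∀ x ∈ support C i, f x = v := by
  rcases hij.lt_or_gt with hlt | hgt
  · exact ⟨c j, hf.eq_on_support_of_lt hclosed hconn hnest hc hlt⟩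
  rcases hnest j i hgt with hsub | hdisj
  · obtain ⟨s, hs, his⟩ := exists_isMaxChild hgt hsub
    exact ⟨c s, fun x hx => hf.eq_of_mem_piece hclosed hconn hnest hc (a := some s)
      ⟨hs, his (support_subset (hclosed i) hx)⟩⟩
  · exact ⟨c j, fun x hx => hf.eq_of_mem_piece hclosed hconn hnest hc (a := none)
      (subset_closure fun hxj => hdisj.subset ⟨hxj, support_subset (hclosed i) hx⟩)⟩

end FlatExtension

theorem filter_factor_lemma_general {M : Type*} [MetricSpace M] [CompactSpace M] [ConnectedSpace M]
    {ι : Type*} [Fintype ι] [LinearOrder ι]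
    (C : ι → Set M)
    (hclosed : ∀ i, IsClosed (C i))
    (hconn : ∀ i, IsConnected (C i))
    (hnest : ∀ i j, i < j → C j ⊂ C i ∨ C i ∩ C j = ∅)
    (D : ι → Set M)
    (hD : ∀ i, D i = closure (C i \ ⋃ j > i, C j))
    (lam : M → ℝ)
    (i₀ : ι) (hroot : C i₀ = Set.univ)
    (lamF : ι → M → ℝ) (hlamF_cont : ∀ i, Continuous (lamF i))
    (hlamF_agree : ∀ i, ∀ x ∈ D i, lamF i x = lam x)
    (hlamF_flat : ∀ i, ∀ x ∈ (D i)ᶜ, ∀ y ∈ connectedComponentIn (D i)ᶜ x,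
      lamF i y = lamF i x)
    (c : ι → ℝ) (hc : ∀ i, i ≠ i₀ → ∀ z ∈ frontier (C i), lam z = c i)
    (b : ι → ℝ) (h : M → ℝ)
    (hh : ∀ p : M,
      h p = b i₀ * lamF i₀ p + ∑ i ∈ Finset.univ.erase i₀, b i * (lamF i p - c i)) :
    ∀ i : ι, ∃ k : ℝ, (∀ p ∈ D i, h p = b i * lam p + k) ∧ (i = i₀ → k = 0) := by
  obtain rfl : D = Lens.support C := funext hD
  have hflat i : IsFlatExtension_s9 lam (Lens.support C i) (lamF i) :=
    ⟨hlamF_cont i, hlamF_agree i, hlamF_flat i⟩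
  -- `C i₀ = univ` has empty frontier, so any value can be assigned to it
  set c' := Function.update c i₀ 0
  have hc' k : ∀ z ∈ frontier (C k), lam z = c' k := by
    rcases eq_or_ne k i₀ with rfl | hk
    · simp [hroot]
    · simpa [c', hk] using hc k hk
  have hh' p : h p = ∑ j, b j * (lamF j p - c' j) := by
    rw [hh, ← Finset.add_sum_erase _ _ (Finset.mem_univ i₀)]
    congr 1
    · simp [c']
    · exact Finset.sum_congr rfl fun j hj => by simp [c', Finset.ne_of_mem_erase hj]
  have hsplit i : ∀ p ∈ Lens.support C i, h p - b i * lam p =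
      ∑ j ∈ Finset.univ.erase i, b j * (lamF j p - c' j) - b i * c' i := fun p hp => by
    rw [hh', ← Finset.add_sum_erase _ _ (Finset.mem_univ i), hlamF_agree i p hp]
    ring
  intro i
  obtain ⟨p₀, hp₀⟩ := Lens.support_nonempty hclosed (hconn i) hnest
  refine ⟨h p₀ - b i * lam p₀, fun p hp => ?_, ?_⟩
  · rw [← sub_eq_iff_eq_add', hsplit i p hp, hsplit i p₀ hp₀]
    congr 1
    refine Finset.sum_congr rfl fun j hj => ?_
    obtain ⟨v, hv⟩ := (hflat j).exists_eq_on_support hclosed hconn hnest hc'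
      (Finset.ne_of_mem_erase hj).symm
    rw [hv p hp, hv p₀ hp₀]
  · rintro rfl
    rw [hsplit i p₀ hp₀]
    refine sub_eq_zero.mpr (Eq.trans (Finset.sum_eq_zero fun j hj => ?_) (by simp [c']))
    have hij : i < j :=
      Lens.lt_of_eq_univ hnest (hconn j).nonempty hroot (Finset.ne_of_mem_erase hj)
    rw [(hflat j).eq_on_support_of_lt hclosed hconn hnest hc' hij p₀ hp₀, sub_self, mul_zero]

/-- Filter Factor Lemma (on the middle space).  In the lens setting with `M`
connected, let `lam : M → ℝ` be constant-boundary for the lens, let `i₀` be an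
index with `C i₀ = M`, let `lamF i` be a flat extension of `lam` over `D i` for
each `i`, and let `b : ι → ℝ` be arbitrary coefficients.  For
`h p = b i₀ * lamF i₀ p + ∑_{i ≠ i₀} b i * (lamF i p - c i)`, on each support
`D i` the function `h` equals `b i * lam + k i` for some constant `k i`, with
`k i₀ = 0`. -/
theorem filter_factor_lemma {M : Type*} [MetricSpace M] [CompactSpace M] [ConnectedSpace M]
    {ι : Type*} [Fintype ι] [LinearOrder ι]
    (C : ι → Set M)
    (hclosed : ∀ i, IsClosed (C i))
    (hconn : ∀ i, IsConnected (C i))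
    (hint : ∀ i, (interior (C i)).Nonempty)
    (hnest : ∀ i j, i < j → C j ⊂ C i ∨ C i ∩ C j = ∅)
    (hcover : ⋃ i, C i = Set.univ)
    (D : ι → Set M)
    (hD : ∀ i, D i = closure (C i \ ⋃ j > i, C j))
    (lam : M → ℝ) (hlamc : Continuous lam)
    (hlamcb : ∀ k, ∀ x ∈ frontier (C k), ∀ y ∈ frontier (C k), lam x = lam y)
    (i₀ : ι) (hroot : C i₀ = Set.univ)
    (lamF : ι → M → ℝ) (hlamF_cont : ∀ i, Continuous (lamF i))
    (hlamF_agree : ∀ i, ∀ x ∈ D i, lamF i x = lam x)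
    (hlamF_flat : ∀ i, ∀ x ∈ (D i)ᶜ, ∀ y ∈ connectedComponentIn (D i)ᶜ x,
      lamF i y = lamF i x)
    (c : ι → ℝ) (hc : ∀ i, i ≠ i₀ → ∀ z ∈ frontier (C i), lam z = c i)
    (b : ι → ℝ) (h : M → ℝ)
    (hh : ∀ p : M,
      h p = b i₀ * lamF i₀ p + ∑ i ∈ Finset.univ.erase i₀, b i * (lamF i p - c i)) :
    ∀ i : ι, ∃ k : ℝ, (∀ p ∈ D i, h p = b i * lam p + k) ∧ (i = i₀ → k = 0) :=
  filter_factor_lemma_general C hclosed hconn hnest D hD lam i₀ hroot lamF hlamF_cont hlamF_agree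
    hlamF_flat c hc b h hh
end
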